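/- Let N = M_p where p = ⟨(0, h_α) : α < ω₁⟩ with each h_α = h given by h(2n+l) = l. Then N has no automorphism mapping (0, x₀) to (0, x₁). -/

import Mathlib

noncomputable section
open Set

/-- `G` is the vector space over `ℤ/2ℤ` with basis indexed by `ℕ`. -/
abbrev G : Type := ℕ →₀ ZMod 2

/-- The basis element `xₙ`. -/
def xg (n : ℕ) : G := Finsupp.single n 1

/-- `G⁰ₙ`: the subspace generated by the `x_k` for `k ≠ n`. -/
def G0 (n : ℕ) : Set G :=
  (Submodule.span (ZMod 2) {y : G | ∃ k : ℕ, k ≠ n ∧ y = xg k} : Submodule (ZMod 2) G)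

/-- `G¹ₙ = xₙ + G⁰ₙ`, the nontrivial coset. -/
def G1 (n : ℕ) : Set G := (fun z => xg n + z) '' G0 n

/-- The family `𝒢 = {Gˡₙ : n < ω, l ∈ {0,1}}`. -/
def Gfam : Set (Set G) := {S | ∃ n : ℕ, S = G0 n ∨ S = G1 n}

/-- The first uncountable ordinal. -/
def omega1 : Ordinal := (Cardinal.aleph 1).ord

/-- The universe of the structure `M`: elements of the parts `A_α = {α} × G`
and of the parts `B_α ⊆ {η : α → 𝒢}` (sequences are padded by `∅` beyond `α`). -/
inductive MU : Type 1 where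
  | a : Ordinal → G → MU
  | b : Ordinal → (Ordinal → Set G) → MU

/-- The condition for `η` (as a total function, padded by `∅`) to code a member of `B_α`:
its values below `α` are in `𝒢` and for some `n` it equals `G⁰ₙ` with finitely many
exceptions. -/
def okB (α : Ordinal) (η : Ordinal → Set G) : Prop :=
  (∀ β, β < α → η β ∈ Gfam) ∧ (∀ β, ¬ β < α → η β = ∅) ∧
    ∃ n : ℕ, {β : Ordinal | β < α ∧ η β ≠ G0 n}.Finite

/-- The universe of `M_{<γ}`, i.e. `∪ {A_β ∪ B_β : β < γ}`. -/
def MUuniv (γ : Ordinal) : Set MU :=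
  {u | match u with
       | .a α _ => α < γ
       | .b α η => α < γ ∧ okB α η}

/-- `u` belongs to the `A`-part (the predicate `P₁`; `P₂` is its negation). -/
def isA : MU → Prop
  | .a _ _ => True
  | .b _ _ => False

/-- The index `α` of the part `A_α` or `B_α` containing the element. -/
def idx : MU → Ordinal
  | .a α _ => α
  | .b α _ => α

/-- The relation `E₁`. -/
def E1 (u v : MU) : Prop := isA u ∧ isA v ∧ idx u ≤ idx v

/-- The relation `E₂`. -/
def E2 (u v : MU) : Prop := ¬ isA u ∧ ¬ isA v ∧ idx u ≤ idx v

/-- The unary function `F_y`: translation by `y` on each `A_α`, identity on each `B_α`. -/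
def Fy (y : G) : MU → MU
  | .a α g => .a α (g + y)
  | .b α η => .b α η

/-- The relation `R = {(η, (α,x)) : α < lh η, x ∈ η(α)}`. -/
def Rmem (u v : MU) : Prop :=
  ∃ (β : Ordinal) (η : Ordinal → Set G) (α : Ordinal) (g : G),
    u = .b β η ∧ v = .a α g ∧ α < β ∧ g ∈ η α

/-- `f` is an automorphism of the restriction of `M` to the set `S`. -/
structure IsAut (S : Set MU) (f : MU → MU) : Prop where
  bij : Set.BijOn f S S
  p1 : ∀ u ∈ S, (isA (f u) ↔ isA u)
  e1 : ∀ u ∈ S, ∀ v ∈ S, (E1 (f u) (f v) ↔ E1 u v)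
  e2 : ∀ u ∈ S, ∀ v ∈ S, (E2 (f u) (f v) ↔ E2 u v)
  fy : ∀ (y : G), ∀ u ∈ S, f (Fy y u) = Fy y (f u)
  r : ∀ u ∈ S, ∀ v ∈ S, (Rmem (f u) (f v) ↔ Rmem u v)

/-- The map `f_ν`: translation by `ν(α)` on `A_α`, coset translation on the `B`-parts. -/
def fnu (ν : Ordinal → G) : MU → MU
  | .a α g => .a α (g + ν α)
  | .b α η => .b α (fun β => (fun z => ν β + z) '' η β)

/-- The support-finiteness condition on `ν : γ → G`:
for every `β < γ` and every `n`, `{α < β : n ∈ supp ν(α)}` is finite. -/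
def SuppFin (γ : Ordinal) (ν : Ordinal → G) : Prop :=
  ∀ β < γ, ∀ n : ℕ, {α : Ordinal | α < β ∧ n ∈ (ν α).support}.Finite

/-- The relation `R₁` of the expansion `M_p`, for the parameter sequence
`p = ⟨(β_α, g_α) : α < ω₁⟩`:
`R₁ = {((β_α, y₂), (α, y₁)) : α < ω₁, g_α(y₁) = y₂}`. -/
def R1 (βf : Ordinal → Ordinal) (gf : Ordinal → (G →+ G)) (u v : MU) : Prop :=
  ∃ (α : Ordinal) (y₁ y₂ : G),
    α < omega1 ∧ v = .a α y₁ ∧ u = .a (βf α) y₂ ∧ gf α y₁ = y₂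

/-- `f` is an automorphism of the restriction of the expansion `M_p` to `S`. -/
structure IsAutP (βf : Ordinal → Ordinal) (gf : Ordinal → (G →+ G))
    (S : Set MU) (f : MU → MU) extends IsAut S f : Prop where
  r1 : ∀ u ∈ S, ∀ v ∈ S, (R1 βf gf (f u) (f v) ↔ R1 βf gf u v)
/-!
An automorphism of `M_p` acts on each `A_α` as translation by some `z_α`; since `R₁` links
`A_α` to `A_0` through `ĥ`, we get `ĥ(z_α) = z_0 = x₀ + x₁`, so no `z_α` vanishes. Hence some
coordinate `n` lies in `supp z_α` for uncountably many `α`, and, `ω₁` having uncountable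
cofinality, for infinitely many `α` below some `β < ω₁`. The image of the element of `B_β` that
is constantly `G⁰ₙ` then has infinitely many entries containing a translate `z_α + G⁰ₙ` with
`n ∈ supp z_α`; no such entry is a `G⁰ₘ`, which contradicts the finiteness condition of `B`.
-/

open scoped Ordinal Cardinal

theorem omega1_eq_omega_one : omega1 = ω₁ := Cardinal.ord_aleph 1

theorem Ordinal.not_countable_Iio_omega_one : ¬ (Iio ω₁).Countable := by
  rw [← Cardinal.le_aleph0_iff_set_countable, Cardinal.mk_Iio_ordinal, Ordinal.card_omega,
    not_le]
  simp

theorem Set.Infinite.exists_lt_omega_one_infinite_inter_Iio {S : Set Ordinal}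
    (hS : S ⊆ Iio ω₁) (hinf : S.Infinite) : ∃ β < ω₁, (S ∩ Iio β).Infinite := by
  let e := hinf.natEmbedding
  refine ⟨⨆ k, (e k : Ordinal) + 1, Ordinal.iSup_lt_omega_one fun k => ?_, ?_⟩
  · rw [← Order.succ_eq_add_one]
    exact (Cardinal.isSuccLimit_omega 1).succ_lt (hS (e k).2)
  · refine Set.infinite_of_injective_forall_mem (f := fun k => (e k : Ordinal))
      (Subtype.val_injective.comp e.injective) fun k => ⟨(e k).2, ?_⟩
    exact (Order.lt_add_one_iff.2 le_rfl).trans_le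
      (Ordinal.le_iSup (fun k => (e k : Ordinal) + 1) k)

theorem not_suppFin_omega1 {Z : Ordinal → G} (hZ : ∀ α < omega1, Z α ≠ 0) :
    ¬ SuppFin omega1 Z := by
  rw [omega1_eq_omega_one] at hZ ⊢
  intro hfin
  have hfinite : ∀ n, {α | α < ω₁ ∧ n ∈ (Z α).support}.Finite := by
    intro n
    by_contra hinf
    obtain ⟨β, hβ, hβinf⟩ := Set.Infinite.exists_lt_omega_one_infinite_inter_Iio
      (fun α hα => hα.1) hinf
    exact hβinf ((hfin β hβ n).subset fun α ⟨⟨_, hn⟩, hαβ⟩ => ⟨hαβ, hn⟩)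
  refine Ordinal.not_countable_Iio_omega_one
    ((Set.countable_iUnion fun n => (hfinite n).countable).mono fun α hα => ?_)
  obtain ⟨n, hn⟩ := Finsupp.support_nonempty_iff.2 (hZ α hα)
  exact Set.mem_iUnion.2 ⟨n, hα, hn⟩

theorem G0_eq_supported (n : ℕ) :
    G0 n = (Finsupp.supported (ZMod 2) (ZMod 2) {k | k ≠ n} : Set G) := by
  rw [G0, Finsupp.supported_eq_span_single]
  congr
  ext y
  simp [xg, eq_comm]

theorem mem_G0_iff {n : ℕ} {y : G} : y ∈ G0 n ↔ y n = 0 := by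
  rw [G0_eq_supported, SetLike.mem_coe, Finsupp.mem_supported']
  simp

theorem apply_eq_zero_of_add_G0_subset {z : G} {m n : ℕ}
    (h : ∀ g ∈ G0 n, z + g ∈ G0 m) : z n = 0 := by
  have hz : z m = 0 := by simpa [mem_G0_iff] using h 0 (mem_G0_iff.2 rfl)
  obtain rfl | hmn := eq_or_ne m n
  · exact hz
  · have := h (xg m) (by simp [mem_G0_iff, xg, hmn])
    simp [mem_G0_iff, hz, xg] at this

@[simp]
theorem Rmem_b_a_iff {β α : Ordinal} {η : Ordinal → Set G} {g : G} :
    Rmem (.b β η) (.a α g) ↔ α < β ∧ g ∈ η α := by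
  simp [Rmem]

@[simp]
theorem R1_a_a_iff {βf : Ordinal → Ordinal} {gf : Ordinal → (G →+ G)} {β α : Ordinal}
    {y₁ y₂ : G} : R1 βf gf (.a β y₂) (.a α y₁) ↔ α < omega1 ∧ β = βf α ∧ gf α y₁ = y₂ := by
  simp [R1, eq_comm]

def constG0 (β : Ordinal) (n : ℕ) : Ordinal → Set G := fun δ => if δ < β then G0 n else ∅

theorem okB_constG0 (β : Ordinal) (n : ℕ) : okB β (constG0 β n) := by
  refine ⟨fun δ hδ => ⟨n, Or.inl (if_pos hδ)⟩, fun δ hδ => if_neg hδ, n, ?_⟩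
  convert Set.finite_empty
  ext δ
  simp +contextual [constG0]

namespace IsAut

variable {S : Set MU} {f : MU → MU}

theorem exists_apply_a (hf : IsAut S f) {α : Ordinal} (hα : MU.a α 0 ∈ S) :
    ∃ β z, ∀ g, f (.a α g) = .a β (z + g) := by
  obtain ⟨β, z, hβz⟩ : ∃ β z, f (.a α 0) = .a β z := by
    have hA := (hf.p1 _ hα).2 trivial
    cases hfa : f (.a α 0) with
    | a β z => exact ⟨β, z, rfl⟩
    | b => simp [hfa, isA] at hA
  exact ⟨β, z, fun g => by simpa [Fy, hβz] using hf.fy g _ hα⟩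

theorem exists_apply_b (hf : IsAut S f) {β : Ordinal} {η : Ordinal → Set G}
    (hb : MU.b β η ∈ S) : ∃ β' η', f (.b β η) = .b β' η' := by
  have hB := (hf.p1 _ hb).not.2 not_false
  cases hfb : f (.b β η) with
  | a => simp [hfb, isA] at hB
  | b β' η' => exact ⟨β', η', rfl⟩

theorem idx_eq_of_idx_apply_eq (hf : IsAut S f) {u v : MU} (hu : u ∈ S) (hv : v ∈ S)
    (hAu : isA u) (hAv : isA v) (h : idx (f u) = idx (f v)) : idx u = idx v := by
  have hAfu := (hf.p1 u hu).2 hAu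
  have hAfv := (hf.p1 v hv).2 hAv
  exact le_antisymm ((hf.e1 u hu v hv).1 ⟨hAfu, hAfv, h.le⟩).2.2
    ((hf.e1 v hv u hu).1 ⟨hAfv, hAfu, h.ge⟩).2.2

variable {γ : Ordinal}

theorem exists_translation (hf : IsAut (MUuniv γ) f) :
    ∃ (π : Ordinal → Ordinal) (Z : Ordinal → G),
      ∀ α < γ, ∀ g, f (.a α g) = .a (π α) (Z α + g) := by
  choose! π Z hπZ using fun α (hα : α < γ) => hf.exists_apply_a (α := α) hα
  exact ⟨π, Z, hπZ⟩

theorem suppFin (hf : IsAut (MUuniv γ) f) {π : Ordinal → Ordinal} {Z : Ordinal → G}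
    (hfa : ∀ α < γ, ∀ g, f (.a α g) = .a (π α) (Z α + g)) : SuppFin γ Z := by
  intro β hβ n
  have hb : MU.b β (constG0 β n) ∈ MUuniv γ := ⟨hβ, okB_constG0 β n⟩
  obtain ⟨β', η', hfb⟩ := hf.exists_apply_b hb
  have hb' := hf.bij.mapsTo hb
  rw [hfb] at hb'
  obtain ⟨-, -, -, m, hfin⟩ : β' < γ ∧ okB β' η' := hb'
  have hR : ∀ α < β, ∀ g ∈ G0 n, π α < β' ∧ Z α + g ∈ η' (π α) := by
    intro α hαβ g hg
    have := (hf.r _ hb (.a α g) (hαβ.trans hβ)).2 (by simp [constG0, hαβ, hg])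
    rwa [hfb, hfa α (hαβ.trans hβ), Rmem_b_a_iff] at this
  have hinj : InjOn π (Iio β) := fun α₁ h₁ α₂ h₂ h => by
    have hα₁ : α₁ < γ := h₁.trans hβ
    have hα₂ : α₂ < γ := h₂.trans hβ
    simpa [idx] using hf.idx_eq_of_idx_apply_eq (u := .a α₁ 0) (v := .a α₂ 0)
      hα₁ hα₂ trivial trivial (by simp [hfa, idx, hα₁, hα₂, h])
  refine Set.Finite.of_finite_image (hfin.subset ?_) (hinj.mono fun α h => h.1)
  rintro _ ⟨α, ⟨hαβ, hn⟩, rfl⟩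
  refine ⟨(hR α hαβ 0 (mem_G0_iff.2 rfl)).1, fun hm => Finsupp.mem_support_iff.1 hn ?_⟩
  exact apply_eq_zero_of_add_G0_subset fun g hg => hm ▸ (hR α hαβ g hg).2

end IsAut

theorem stmt15_general (H : G →+ G) :
    ¬ ∃ f : MU → MU, IsAutP (fun _ => 0) (fun _ => H) (MUuniv omega1) f ∧
      f (.a 0 (xg 0)) = .a 0 (xg 1) := by
  rintro ⟨f, hf, hfx⟩
  obtain ⟨π, Z, hfa⟩ := hf.toIsAut.exists_translation
  have h0 : (0 : Ordinal) < omega1 := omega1_eq_omega_one ▸ Ordinal.omega_pos 1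
  have hZ0 : Z 0 ≠ 0 := by
    intro hZ0
    rw [hfa 0 h0, hZ0, zero_add] at hfx
    exact zero_ne_one (Finsupp.single_left_injective one_ne_zero (MU.a.inj hfx).2)
  have hHZ : ∀ α < omega1, H (Z α) = Z 0 := by
    intro α hα
    have hR1 := (hf.r1 (.a 0 0) h0 (.a α 0) hα).2 (R1_a_a_iff.2 ⟨hα, rfl, map_zero H⟩)
    rw [hfa 0 h0, hfa α hα, add_zero, add_zero, R1_a_a_iff] at hR1
    exact hR1.2.2
  refine not_suppFin_omega1 (fun α hα hZα => hZ0 ?_) (hf.suppFin hfa)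
  rw [← hHZ α hα, hZα, map_zero]

/-- Let `N = M_p` where `p = ⟨(0, h_α) : α < ω₁⟩` with each
`h_α = h` given by `h(2n+l) = l`, inducing the homomorphism `ĥ = H` on `G`.
Then `N` has no automorphism mapping `(0, x₀)` to `(0, x₁)`. -/
theorem stmt15 (h : ℕ → ℕ) (hh : ∀ n l : ℕ, l < 2 → h (2 * n + l) = l)
    (H : G →+ G) (hH : ∀ u : Finset ℕ, H (∑ n ∈ u, xg n) = ∑ n ∈ u, xg (h n)) :
    ¬ ∃ f : MU → MU, IsAutP (fun _ => 0) (fun _ => H) (MUuniv omega1) f ∧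
      f (.a 0 (xg 0)) = .a 0 (xg 1) :=
  stmt15_general H
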